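/- For all natural numbers n, k, ℓ, i with i ≤ ℓ ≤ n/2 and i ≤ k, the ratio C(k,i)·C(n-k,ℓ-i)/C(n,ℓ) is at most (k^i / i!) · (ℓ^i / (n-ℓ)^i). -/

import Mathlib

/-!
Choosing the `i` special elements first, `C(k,i)·C(n-k,ℓ-i) ≤ C(k,i)·C(n-i,ℓ-i)`, and
`C(n,ℓ)·C(ℓ,i) = C(n,i)·C(n-i,ℓ-i)` turns the remaining ratio into `C(ℓ,i)/C(n,i)`, a product
of the factors `(ℓ-j)/(n-j) ≤ ℓ/n`. Together with `C(k,i) ≤ k^i/i!` this gives the bound with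
`(ℓ/n)^i`, which is at most `(ℓ/(n-ℓ))^i`.
-/

namespace Nat

theorem sub_mul_le_sub_mul {ℓ n : ℕ} (h : ℓ ≤ n) (j : ℕ) : (ℓ - j) * n ≤ (n - j) * ℓ := by
  rw [Nat.sub_mul, Nat.sub_mul, Nat.mul_comm n ℓ]
  exact Nat.sub_le_sub_left (Nat.mul_le_mul_left j h) _

theorem descFactorial_mul_pow_le {ℓ n : ℕ} (h : ℓ ≤ n) :
    ∀ i : ℕ, ℓ.descFactorial i * n ^ i ≤ n.descFactorial i * ℓ ^ i
  | 0 => by simp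
  | i + 1 => by
    calc ℓ.descFactorial (i + 1) * n ^ (i + 1)
        = ((ℓ - i) * n) * (ℓ.descFactorial i * n ^ i) := by rw [descFactorial_succ]; ring
      _ ≤ ((n - i) * ℓ) * (n.descFactorial i * ℓ ^ i) :=
          Nat.mul_le_mul (sub_mul_le_sub_mul h i) (descFactorial_mul_pow_le h i)
      _ = n.descFactorial (i + 1) * ℓ ^ (i + 1) := by rw [descFactorial_succ]; ring

theorem choose_mul_pow_le {ℓ n : ℕ} (h : ℓ ≤ n) (i : ℕ) :
    ℓ.choose i * n ^ i ≤ n.choose i * ℓ ^ i := by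
  have := descFactorial_mul_pow_le h i
  rw [descFactorial_eq_factorial_mul_choose, descFactorial_eq_factorial_mul_choose,
    Nat.mul_assoc, Nat.mul_assoc] at this
  exact Nat.le_of_mul_le_mul_left this (factorial_pos i)

theorem choose_sub_mul_pow_le {i ℓ n : ℕ} (hi : i ≤ ℓ) (hℓ : ℓ ≤ n) :
    (n - i).choose (ℓ - i) * n ^ i ≤ n.choose ℓ * ℓ ^ i := by
  refine Nat.le_of_mul_le_mul_left ?_ (choose_pos (hi.trans hℓ))
  calc n.choose i * ((n - i).choose (ℓ - i) * n ^ i)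
      = n.choose ℓ * (ℓ.choose i * n ^ i) := by rw [← Nat.mul_assoc, ← choose_mul hi]; ring
    _ ≤ n.choose ℓ * (n.choose i * ℓ ^ i) := Nat.mul_le_mul_left _ (choose_mul_pow_le hℓ i)
    _ = n.choose i * (n.choose ℓ * ℓ ^ i) := by ring

theorem choose_mul_choose_sub_le (k n i j : ℕ) :
    k.choose i * (n - k).choose j ≤ k.choose i * (n - i).choose j := by
  rcases le_or_gt i k with hik | hki
  · exact Nat.mul_le_mul_left _ (choose_le_choose j (by omega))
  · simp [choose_eq_zero_of_lt hki]

theorem choose_mul_factorial_le_pow (k i : ℕ) : k.choose i * i ! ≤ k ^ i := by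
  rw [Nat.mul_comm, ← descFactorial_eq_factorial_mul_choose]
  exact descFactorial_le_pow k i

theorem choose_mul_choose_sub_mul_le {k i ℓ n : ℕ} (hi : i ≤ ℓ) (hℓ : ℓ ≤ n) :
    k.choose i * (n - k).choose (ℓ - i) * (i ! * n ^ i) ≤ k ^ i * ℓ ^ i * n.choose ℓ :=
  calc k.choose i * (n - k).choose (ℓ - i) * (i ! * n ^ i)
      ≤ k.choose i * (n - i).choose (ℓ - i) * (i ! * n ^ i) :=
        Nat.mul_le_mul_right _ (choose_mul_choose_sub_le k n i (ℓ - i))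
    _ = (k.choose i * i !) * ((n - i).choose (ℓ - i) * n ^ i) := by ring
    _ ≤ k ^ i * (n.choose ℓ * ℓ ^ i) :=
        Nat.mul_le_mul (choose_mul_factorial_le_pow k i) (choose_sub_mul_pow_le hi hℓ)
    _ = k ^ i * ℓ ^ i * n.choose ℓ := by ring

end Nat

theorem stmt3_general (n k ℓ i : ℕ) (h1 : i ≤ ℓ) (h2 : 2 * ℓ ≤ n) :
    ((k.choose i : ℝ) * ((n - k).choose (ℓ - i) : ℝ)) / (n.choose ℓ : ℝ) ≤
      ((k : ℝ) ^ i / (Nat.factorial i : ℝ)) * ((ℓ : ℝ) ^ i / ((n : ℝ) - ℓ) ^ i) := by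
  have hℓn : ℓ ≤ n := by omega
  have hnat : k.choose i * (n - k).choose (ℓ - i) * (i.factorial * (n - ℓ) ^ i) ≤
      k ^ i * ℓ ^ i * n.choose ℓ :=
    le_trans (Nat.mul_le_mul_left _ (Nat.mul_le_mul_left _ (Nat.pow_le_pow_left (n.sub_le ℓ) i)))
      (Nat.choose_mul_choose_sub_mul_le h1 hℓn)
  have hpow : 0 < (n - ℓ) ^ i := by
    rcases i.eq_zero_or_pos with rfl | hi
    · simp
    · exact Nat.pow_pos (by omega)
  have hchoose : (0 : ℝ) < n.choose ℓ := mod_cast Nat.choose_pos hℓn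
  rw [← Nat.cast_sub hℓn, div_mul_div_comm,
    div_le_div_iff₀ hchoose (mul_pos (by positivity) (mod_cast hpow))]
  exact_mod_cast hnat

/-- Hypergeometric ratio bound: for `i ≤ ℓ ≤ n/2`, `i ≤ k ≤ n`,
`C(k,i)·C(n-k,ℓ-i)/C(n,ℓ) ≤ (k^i/i!) · (ℓ^i/(n-ℓ)^i)`. -/
theorem stmt3 (n k ℓ i : ℕ) (h1 : i ≤ ℓ) (h2 : 2 * ℓ ≤ n) (h3 : i ≤ k) (h4 : k ≤ n) :
    ((k.choose i : ℝ) * ((n - k).choose (ℓ - i) : ℝ)) / (n.choose ℓ : ℝ) ≤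
      ((k : ℝ) ^ i / (Nat.factorial i : ℝ)) * ((ℓ : ℝ) ^ i / ((n : ℝ) - ℓ) ^ i) :=
  stmt3_general n k ℓ i h1 h2
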